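/- Let n ∈ ℕ, ε ∈ (0,1), and let Y ∈ ℝ^{n×n} satisfy ‖I_n − Y‖_F ≤ ε·√n, where I_n is the n×n identity matrix. Then rank(Y) ≥ n·(1 − ε²). -/

import Mathlib

open Matrix MeasureTheory ProbabilityTheory
open scoped BigOperators Kronecker

/-- Maximum (entrywise) norm of a matrix. -/
noncomputable def maxNorm {m n : ℕ} (X : Matrix (Fin m) (Fin n) ℝ) : ℝ :=
  ⨆ i, ⨆ j, |X i j|

/-- Spectral norm (largest singular value) of a matrix: the ℓ²→ℓ² operator norm. -/
noncomputable def spectralNorm' {m n : Type*} [Fintype m] [Fintype n] [DecidableEq n]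
    (X : Matrix m n ℝ) : ℝ :=
  ‖LinearMap.toContinuousLinearMap (Matrix.toEuclideanLin X)‖

/-- Frobenius norm of a matrix. -/
noncomputable def frobNorm {m n : Type*} [Fintype m] [Fintype n] (X : Matrix m n ℝ) : ℝ :=
  Real.sqrt (∑ i, ∑ j, (X i j) ^ 2)

/-- Euclidean (ℓ₂) norm of a vector. -/
noncomputable def eNorm {ι : Type*} [Fintype ι] (w : ι → ℝ) : ℝ :=
  Real.sqrt (∑ i, w i ^ 2)

/-- Coherence of a subspace `L ⊆ ℝ^m`:  `μ_L = (m / dim L) · max_i ‖Π_L e_i‖²`. -/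
noncomputable def coherence {m : ℕ} (L : Submodule ℝ (EuclideanSpace ℝ (Fin m))) : ℝ :=
  ((m : ℝ) / (Module.finrank ℝ L)) *
    ⨆ i : Fin m,
      ‖(L.orthogonalProjection (EuclideanSpace.single i 1) : EuclideanSpace ℝ (Fin m))‖ ^ 2

/-- Column space of a matrix, as a subspace of `ℝ^m`. -/
noncomputable def colSpace {m n : ℕ} (X : Matrix (Fin m) (Fin n) ℝ) :
    Submodule ℝ (EuclideanSpace ℝ (Fin m)) :=
  LinearMap.range (Matrix.toEuclideanLin X)

/-- Row space of a matrix, as a subspace of `ℝ^n`. -/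
noncomputable def rowSpace {m n : ℕ} (X : Matrix (Fin m) (Fin n) ℝ) :
    Submodule ℝ (EuclideanSpace ℝ (Fin n)) :=
  colSpace Xᵀ

/-- Sub-Gaussian norm ‖ξ‖_{ψ₂} = sup_{p ∈ ℕ} p^{-1/2} (E|ξ|^p)^{1/p}. -/
noncomputable def subGaussianNorm {Ω : Type*} [MeasurableSpace Ω]
    (μ : MeasureTheory.Measure Ω) (ξ : Ω → ℝ) : ℝ :=
  ⨆ p : ℕ, (p : ℝ) ^ (-(1:ℝ)/2) * (∫ ω, |ξ ω| ^ p ∂μ) ^ ((p : ℝ)⁻¹)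

/- ### Auxiliary lemmas -/

/-- Parseval: squared norm is the sum of squared coefficients in an orthonormal basis. -/
lemma aux_parseval {n : ℕ} (b : OrthonormalBasis (Fin n) ℝ (EuclideanSpace ℝ (Fin n)))
    (x : EuclideanSpace ℝ (Fin n)) :
    ‖x‖ ^ 2 = ∑ i, (inner ℝ x (b i) : ℝ) ^ 2 := by
  rw [← real_inner_self_eq_norm_sq, ← b.sum_inner_mul_inner x x]
  refine Finset.sum_congr rfl fun i _ => ?_
  rw [real_inner_comm (b i) x]; ring

/-- The "Hilbert–Schmidt" sum `∑ ‖L bⱼ‖²` does not depend on the orthonormal basis. -/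
lemma aux_hs_indep {n : ℕ} (L : EuclideanSpace ℝ (Fin n) →ₗ[ℝ] EuclideanSpace ℝ (Fin n))
    (b c : OrthonormalBasis (Fin n) ℝ (EuclideanSpace ℝ (Fin n))) :
    ∑ j, ‖L (b j)‖ ^ 2 = ∑ j, ‖L (c j)‖ ^ 2 := by
  have key : ∀ b : OrthonormalBasis (Fin n) ℝ (EuclideanSpace ℝ (Fin n)),
      ∑ j, ‖L (b j)‖ ^ 2 = ∑ i, ‖(LinearMap.adjoint L) (c i)‖ ^ 2 := by
    intro b
    calc ∑ j, ‖L (b j)‖ ^ 2 = ∑ j, ∑ i, (inner ℝ (L (b j)) (c i) : ℝ) ^ 2 := by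
          simp_rw [aux_parseval c]
      _ = ∑ i, ∑ j, (inner ℝ ((LinearMap.adjoint L) (c i)) (b j) : ℝ) ^ 2 := by
          rw [Finset.sum_comm]
          refine Finset.sum_congr rfl fun i _ => Finset.sum_congr rfl fun j _ => ?_
          rw [LinearMap.adjoint_inner_left, real_inner_comm]
      _ = ∑ i, ‖(LinearMap.adjoint L) (c i)‖ ^ 2 := by
          refine Finset.sum_congr rfl fun i _ => ?_
          rw [aux_parseval b]
  rw [key b, key c]

set_option maxHeartbeats 1000000 in
/-- If `M` acts as the identity on a subspace `K`, the HS-sum of `M` over the standard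
basis is at least `dim K`. -/
lemma aux_ker_bound {n : ℕ} (M : EuclideanSpace ℝ (Fin n) →ₗ[ℝ] EuclideanSpace ℝ (Fin n))
    (K : Submodule ℝ (EuclideanSpace ℝ (Fin n))) (hMK : ∀ x ∈ K, M x = x) :
    (Module.finrank ℝ K : ℝ) ≤ ∑ j, ‖M ((EuclideanSpace.basisFun (Fin n) ℝ) j)‖ ^ 2 := by
  classical
  set d := Module.finrank ℝ K with hd
  have hd_le : d ≤ n := by
    simpa [finrank_euclideanSpace_fin] using Submodule.finrank_le K
  let ob : OrthonormalBasis (Fin d) ℝ K := stdOrthonormalBasis ℝ K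
  let v : Fin n → EuclideanSpace ℝ (Fin n) := fun i =>
    if hi : (i : ℕ) < d then ((ob ⟨i, hi⟩ : K) : EuclideanSpace ℝ (Fin n)) else 0
  have hvK : ∀ (i : Fin n), (i : ℕ) < d → v i ∈ K := by
    intro i hi
    simp only [v, dif_pos hi]
    exact (ob ⟨i, hi⟩).2
  have hv_orth : Orthonormal ℝ (({i : Fin n | (i : ℕ) < d} : Set (Fin n)).restrict v) := by
    rw [orthonormal_iff_ite]
    rintro ⟨i, hi⟩ ⟨j, hj⟩
    have key : (inner ℝ (v i) (v j) : ℝ) = inner ℝ (ob ⟨i, hi⟩) (ob ⟨j, hj⟩) := by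
      have hi' : (i : ℕ) < d := hi
      have hj' : (j : ℕ) < d := hj
      simp only [v]
      rw [dif_pos hi', dif_pos hj']
      exact (Submodule.coe_inner K _ _).symm
    change inner ℝ (v i) (v j) = _
    rw [key, orthonormal_iff_ite.mp ob.orthonormal]
    congr 1
    simp [Fin.ext_iff, Subtype.ext_iff]
  obtain ⟨b, hb⟩ := hv_orth.exists_orthonormalBasis_extension_of_card_eq
    (by simp [finrank_euclideanSpace_fin])
  have hM_id : ∀ (i : Fin n), (i : ℕ) < d → M (b i) = b i := by
    intro i hi
    have hbv : b i = v i := hb i hi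
    rw [hbv]
    exact hMK _ (hvK i hi)
  have hlow : (d : ℝ) ≤ ∑ j, ‖M (b j)‖ ^ 2 := by
    have hinj : Function.Injective (Fin.castLE hd_le) := Fin.castLE_injective hd_le
    have hsub : (Finset.univ.map ⟨Fin.castLE hd_le, hinj⟩) ⊆ Finset.univ := Finset.subset_univ _
    have h1 : ∑ k : Fin d, ‖M (b (Fin.castLE hd_le k))‖ ^ 2
        = ∑ j ∈ Finset.univ.map ⟨Fin.castLE hd_le, hinj⟩, ‖M (b j)‖ ^ 2 :=
      (Finset.sum_map Finset.univ ⟨Fin.castLE hd_le, hinj⟩ (fun j => ‖M (b j)‖ ^ 2)).symm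
    have h2 : ∀ k : Fin d, ‖M (b (Fin.castLE hd_le k))‖ ^ 2 = 1 := by
      intro k
      have hk : ((Fin.castLE hd_le k : Fin n) : ℕ) < d := by simp [k.isLt]
      rw [hM_id _ hk]
      have hn1 := b.orthonormal.1 (Fin.castLE hd_le k)
      rw [hn1]; norm_num
    calc (d : ℝ) = ∑ k : Fin d, ‖M (b (Fin.castLE hd_le k))‖ ^ 2 := by simp [h2]
      _ = ∑ j ∈ Finset.univ.map ⟨Fin.castLE hd_le, hinj⟩, ‖M (b j)‖ ^ 2 := h1
      _ ≤ ∑ j, ‖M (b j)‖ ^ 2 := by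
          refine Finset.sum_le_sum_of_subset_of_nonneg hsub fun j _ _ => by positivity
  calc (d : ℝ) ≤ ∑ j, ‖M (b j)‖ ^ 2 := hlow
    _ = ∑ j, ‖M ((EuclideanSpace.basisFun (Fin n) ℝ) j)‖ ^ 2 :=
        aux_hs_indep M b (EuclideanSpace.basisFun (Fin n) ℝ)

set_option maxHeartbeats 1000000 in
/-- A matrix Frobenius-close to the identity must have nearly full rank. -/
theorem stmt16 {n : ℕ} (ε : ℝ) (hε0 : 0 < ε) (hε1 : ε < 1)
    (Y : Matrix (Fin n) (Fin n) ℝ)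
    (h : frobNorm ((1 : Matrix (Fin n) (Fin n) ℝ) - Y) ≤ ε * Real.sqrt n) :
    (n : ℝ) * (1 - ε ^ 2) ≤ Y.rank := by
  classical
  set E : Matrix (Fin n) (Fin n) ℝ := (1 : Matrix (Fin n) (Fin n) ℝ) - Y with hE
  set L : EuclideanSpace ℝ (Fin n) →ₗ[ℝ] EuclideanSpace ℝ (Fin n) :=
    Matrix.toEuclideanLin Y with hL
  set M : EuclideanSpace ℝ (Fin n) →ₗ[ℝ] EuclideanSpace ℝ (Fin n) :=
    Matrix.toEuclideanLin E with hM
  have hMK : ∀ x ∈ LinearMap.ker L, M x = x := by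
    intro x hx
    have hker : L x = 0 := LinearMap.mem_ker.mp hx
    have hone : Matrix.toEuclideanLin (1 : Matrix (Fin n) (Fin n) ℝ) x = x := by
      rw [Matrix.toEuclideanLin_apply, Matrix.one_mulVec]
    have hMx : M x = x - L x := by
      rw [hM, hE, map_sub, LinearMap.sub_apply, hone, hL]
    rw [hMx, hker, sub_zero]
  have hbound := aux_ker_bound M (LinearMap.ker L) hMK
  -- compute the HS sum with respect to the standard basis
  have hfro : ∑ j, ‖M ((EuclideanSpace.basisFun (Fin n) ℝ) j)‖ ^ 2
      = ∑ i, ∑ j, (E i j) ^ 2 := by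
    rw [Finset.sum_comm]
    refine Finset.sum_congr rfl fun j _ => ?_
    have happ : M ((EuclideanSpace.basisFun (Fin n) ℝ) j)
        = (WithLp.equiv 2 (Fin n → ℝ)).symm (E *ᵥ Pi.single j 1) := by
      rw [hM, EuclideanSpace.basisFun_apply, ← EuclideanSpace.toLp_single]
      exact Matrix.toEuclideanLin_apply_piLp_toLp E (Pi.single j 1)
    rw [happ, EuclideanSpace.norm_eq, Real.sq_sqrt (by positivity)]
    refine Finset.sum_congr rfl fun i _ => ?_
    have hco : (WithLp.equiv 2 (Fin n → ℝ)).symm (E *ᵥ Pi.single j 1) i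
        = (E *ᵥ Pi.single j 1) i := rfl
    rw [hco, Matrix.mulVec_single]
    simp [sq_abs]
  -- upper bound by ε² n
  have hup : ∑ i, ∑ j, (E i j) ^ 2 ≤ ε ^ 2 * n := by
    have hsq : frobNorm E ^ 2 ≤ (ε * Real.sqrt n) ^ 2 := by
      have hfr0 : (0 : ℝ) ≤ frobNorm E := Real.sqrt_nonneg _
      nlinarith [Real.sqrt_nonneg (n : ℝ)]
    have h1 : frobNorm E ^ 2 = ∑ i, ∑ j, (E i j) ^ 2 := by
      rw [frobNorm, Real.sq_sqrt (by positivity)]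
    have h2 : (ε * Real.sqrt n) ^ 2 = ε ^ 2 * n := by
      rw [mul_pow, Real.sq_sqrt (Nat.cast_nonneg n)]
    rw [h1, h2] at hsq
    exact hsq
  set d : ℕ := Module.finrank ℝ (LinearMap.ker L) with hd
  have hdn : (d : ℝ) ≤ ε ^ 2 * n := le_trans (by rw [← hfro]; exact hbound) hup
  -- rank-nullity
  have hrank : Y.rank = Module.finrank ℝ (LinearMap.range L) := by
    rw [hL, Matrix.toEuclideanLin_eq_toLin]
    exact Matrix.rank_eq_finrank_range_toLin Y (PiLp.basisFun 2 ℝ (Fin n))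
      (PiLp.basisFun 2 ℝ (Fin n))
  have hrn : Module.finrank ℝ (LinearMap.range L) + d = n := by
    rw [hd, LinearMap.finrank_range_add_finrank_ker L, finrank_euclideanSpace_fin]
  have hrankd : (Y.rank : ℝ) = (n : ℝ) - d := by
    rw [hrank]
    have hc := congrArg (fun x : ℕ => (x : ℝ)) hrn
    push_cast at hc ⊢
    linarith
  rw [hrankd]
  nlinarith [hdn]
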